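/- arXiv:1511.01781 — 5 statements merged into one kernel-verified Lean document; each statement's English description precedes it below -/
import Mathlib

section
/- Let A,B,C,D,E ∈ ℂ satisfy AB − 2AC + DE = 0, A ≠ 0, D² ≠ 4A² and E² ≠ 4A². Then there are exactly eight 2-dimensional ℂ-linear subspaces W of ℂ⁴ such that both the quadratic form xy + zw and the quartic F_{A,B,C,D,E} vanish identically on W; that is, the surface X_{A,B,C,D,E} contains exactly eight lines lying on the quadric Q₆ = {xy + zw = 0} ⊂ ℙ³(ℂ). -/
/-!
The quadric `xy + zw = 0` is swept out by the lines `x = s w, z = -s y` and by the lines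
`x = s z, w = -s y`, together with one line of each ruling through `e₀ = (1, 0, 0, 0)`; those two
do not lie on `X` because `F(e₀) = A ≠ 0`. Concretely, a totally isotropic plane `W` not containing
`e₀` projects isomorphically onto the `(y, w)`-plane or onto the `(y, z)`-plane, and isotropy of
the two preimages of a basis forces `W` to be one of the lines above.

On the line `x = s w, z = -s y` the quartic restricts to
`(A s⁴ + E s² + A)(y⁴ + w⁴) + (D s⁴ + (2C - B) s² + D) y² w²`, and `AB - 2AC + DE = 0` makes the
second coefficient vanish as soon as the first does. So the line lies on `X` iff
`A s⁴ + E s² + A = 0`, which has four distinct roots because `E² ≠ 4A²`; the same holds for the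
other ruling with `D` in place of `E`.
-/

/-- The quartic `F_{A,B,C,D,E} = A(x⁴+y⁴+z⁴+w⁴) + Bxyzw + C(x²y²+z²w²) + D(x²z²+y²w²)
+ E(x²w²+y²z²)`, as a function on `ℂ⁴`. -/
def quarticF (A B C D E : ℂ) (v : Fin 4 → ℂ) : ℂ :=
  A * (v 0 ^ 4 + v 1 ^ 4 + v 2 ^ 4 + v 3 ^ 4) + B * (v 0 * v 1 * v 2 * v 3)
    + C * (v 0 ^ 2 * v 1 ^ 2 + v 2 ^ 2 * v 3 ^ 2)
    + D * (v 0 ^ 2 * v 2 ^ 2 + v 1 ^ 2 * v 3 ^ 2)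
    + E * (v 0 ^ 2 * v 3 ^ 2 + v 1 ^ 2 * v 2 ^ 2)

open Module Submodule

namespace LinesOnQuadric

section Roots

variable {K : Type*} [Field K] [IsAlgClosed K] [NeZero (2 : K)]

theorem ncard_sq_eq {y : K} (hy : y ≠ 0) : {s : K | s ^ 2 = y}.ncard = 2 := by
  obtain ⟨r, rfl⟩ := IsAlgClosed.exists_pow_nat_eq y two_pos
  have hr : r ≠ -r := fun h => by
    have : (2 : K) * r = 0 := by linear_combination h
    exact hy (by simp [(mul_eq_zero.1 this).resolve_left two_ne_zero])
  have hset : {s : K | s ^ 2 = r ^ 2} = {r, -r} := by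
    ext s
    simp [sq_eq_sq_iff_eq_or_eq_neg]
  rw [hset, Set.ncard_pair hr]

theorem ncard_biquadratic_roots {a b c : K} (ha : a ≠ 0) (hc : c ≠ 0) (hd : discrim a b c ≠ 0) :
    {s : K | a * s ^ 4 + b * s ^ 2 + c = 0}.ncard = 4 := by
  obtain ⟨δ, hδ⟩ := IsAlgClosed.exists_eq_mul_self (discrim a b c)
  have hroots := quadratic_eq_zero_iff ha hδ
  set y₁ := (-b + δ) / (2 * a)
  set y₂ := (-b - δ) / (2 * a)
  have hy : ∀ y, a * (y * y) + b * y + c = 0 → y ≠ 0 := by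
    rintro y h rfl
    exact hc (by simpa using h)
  have hy₁ : y₁ ≠ 0 := hy _ ((hroots _).2 (Or.inl rfl))
  have hy₂ : y₂ ≠ 0 := hy _ ((hroots _).2 (Or.inr rfl))
  have hy₁₂ : y₁ ≠ y₂ := by
    intro h
    rw [div_left_inj' (mul_ne_zero two_ne_zero ha)] at h
    have : (2 : K) * δ = 0 := by linear_combination h
    exact hd (by simp_all)
  have hset : {s : K | a * s ^ 4 + b * s ^ 2 + c = 0} = {s | s ^ 2 = y₁} ∪ {s | s ^ 2 = y₂} := by
    ext s
    simp only [Set.mem_ofPred_eq, Set.mem_union, ← hroots]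
    ring_nf
  have hfin : ∀ {y : K}, y ≠ 0 → {s : K | s ^ 2 = y}.Finite := fun hy =>
    Set.finite_of_ncard_ne_zero (by rw [ncard_sq_eq hy]; norm_num)
  rw [hset, Set.ncard_union_eq (Set.disjoint_left.2 fun s h₁ h₂ => hy₁₂ (h₁.symm.trans h₂))
    (hfin hy₁) (hfin hy₂), ncard_sq_eq hy₁, ncard_sq_eq hy₂]

end Roots

section Rulings

variable {K : Type*} [Field K]

theorem finrank_span_pair {V : Type*} [AddCommGroup V] [Module K V] {x y : V}
    (h : LinearIndependent K ![x, y]) : finrank K (span K {x, y}) = 2 := by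
  have := finrank_span_eq_card h
  rwa [Matrix.range_cons_cons_empty, Fintype.card_fin] at this

theorem exists_mem_apply_eq {V : Type*} [AddCommGroup V] [Module K V] [FiniteDimensional K V]
    {W : Submodule K V} (hW : finrank K W = 2) (f g : Dual K V)
    (hfg : ∀ v ∈ W, f v = 0 → g v = 0 → v = 0) (a b : K) : ∃ v ∈ W, f v = a ∧ g v = b := by
  let π : W →ₗ[K] K × K := (f.prod g).domRestrict W
  have hπ : Function.Injective π := by
    rw [← LinearMap.ker_eq_bot, LinearMap.ker_eq_bot']
    rintro ⟨v, hv⟩ h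
    simp only [π, LinearMap.domRestrict_apply, LinearMap.prod_apply, Function.prod_apply,
      Prod.mk_eq_zero] at h
    exact Subtype.ext (hfg v hv h.1 h.2)
  obtain ⟨⟨v, hv⟩, hπv⟩ :=
    (LinearMap.injective_iff_surjective_of_finrank_eq_finrank (by simp [hW])).1 hπ (a, b)
  exact ⟨v, hv, congrArg Prod.fst hπv, congrArg Prod.snd hπv⟩

def rulingL (s : K) : Submodule K (Fin 4 → K) :=
  span K {![s, 0, 0, 1], ![0, 1, -s, 0]}

def rulingM (s : K) : Submodule K (Fin 4 → K) :=
  span K {![s, 0, 1, 0], ![0, 1, 0, -s]}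

theorem mem_rulingL {s : K} {v : Fin 4 → K} : v ∈ rulingL s ↔ v 0 = s * v 3 ∧ v 2 = -(s * v 1) := by
  rw [rulingL, mem_span_pair]
  constructor
  · rintro ⟨a, b, rfl⟩
    simp [mul_comm]
  · rintro ⟨h0, h2⟩
    exact ⟨v 3, v 1, by funext i; fin_cases i <;> simp [h0, h2, mul_comm]⟩

theorem mem_rulingM {s : K} {v : Fin 4 → K} : v ∈ rulingM s ↔ v 0 = s * v 2 ∧ v 3 = -(s * v 1) := by
  rw [rulingM, mem_span_pair]
  constructor
  · rintro ⟨a, b, rfl⟩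
    simp [mul_comm]
  · rintro ⟨h0, h3⟩
    exact ⟨v 2, v 1, by funext i; fin_cases i <;> simp [h0, h3, mul_comm]⟩

theorem finrank_rulingL (s : K) : finrank K (rulingL s) = 2 := by
  refine finrank_span_pair (LinearIndependent.pair_iff.2 fun a b h => ?_)
  have h1 := congrFun h 1
  have h3 := congrFun h 3
  simp_all

theorem finrank_rulingM (s : K) : finrank K (rulingM s) = 2 := by
  refine finrank_span_pair (LinearIndependent.pair_iff.2 fun a b h => ?_)
  have h1 := congrFun h 1
  have h2 := congrFun h 2
  simp_all

theorem isotropic_of_mem_rulingL {s : K} {v : Fin 4 → K} (hv : v ∈ rulingL s) :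
    v 0 * v 1 + v 2 * v 3 = 0 := by
  obtain ⟨h0, h2⟩ := mem_rulingL.1 hv
  rw [h0, h2]
  ring

theorem isotropic_of_mem_rulingM {s : K} {v : Fin 4 → K} (hv : v ∈ rulingM s) :
    v 0 * v 1 + v 2 * v 3 = 0 := by
  obtain ⟨h0, h3⟩ := mem_rulingM.1 hv
  rw [h0, h3]
  ring

theorem rulingL_injective : Function.Injective (rulingL : K → Submodule K (Fin 4 → K)) := by
  intro s t h
  have hs : ![s, 0, 0, 1] ∈ rulingL t := h ▸ mem_rulingL.2 (by simp)
  simpa using (mem_rulingL.1 hs).1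

theorem rulingM_injective : Function.Injective (rulingM : K → Submodule K (Fin 4 → K)) := by
  intro s t h
  have hs : ![s, 0, 1, 0] ∈ rulingM t := h ▸ mem_rulingM.2 (by simp)
  simpa using (mem_rulingM.1 hs).1

theorem rulingL_ne_rulingM (s t : K) : rulingL s ≠ rulingM t := by
  intro h
  have hs : ![s, 0, 0, 1] ∈ rulingM t := h ▸ mem_rulingL.2 (by simp)
  simpa using (mem_rulingM.1 hs).2

theorem disjoint_image_rulingL_image_rulingM (S T : Set K) :
    Disjoint (rulingL '' S) (rulingM '' T) := by
  rw [Set.disjoint_left]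
  rintro _ ⟨s, -, rfl⟩ ⟨t, -, h⟩
  exact rulingL_ne_rulingM s t h.symm

variable {W : Submodule K (Fin 4 → K)}

theorem exists_eq_rulingL (hW : finrank K W = 2) (hq : ∀ v ∈ W, v 0 * v 1 + v 2 * v 3 = 0)
    (hinj : ∀ v ∈ W, v 1 = 0 → v 3 = 0 → v = 0) : ∃ s, W = rulingL s := by
  obtain ⟨p, hpW, hp1, hp3⟩ := exists_mem_apply_eq hW (.proj 1) (.proj 3) hinj 1 0
  obtain ⟨q, hqW, hq1, hq3⟩ := exists_mem_apply_eq hW (.proj 1) (.proj 3) hinj 0 1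
  simp only [LinearMap.proj_apply] at hp1 hp3 hq1 hq3
  have hp0 : p 0 = 0 := by simpa [hp1, hp3] using hq p hpW
  have hq2 : q 2 = 0 := by simpa [hq1, hq3] using hq q hqW
  have hpq : p 2 = -q 0 := by
    have := hq (p + q) (add_mem hpW hqW)
    simp only [Pi.add_apply, hp0, hp1, hp3, hq1, hq2, hq3] at this
    linear_combination this
  refine ⟨q 0, eq_of_le_of_finrank_eq (fun v hv => ?_) (by rw [hW, finrank_rulingL])⟩
  -- `v` agrees with `v 1 • p + v 3 • q` in the coordinates `y, w`, hence everywhere.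
  have hv' := hinj (v - v 1 • p - v 3 • q)
    (sub_mem (sub_mem hv (smul_mem _ _ hpW)) (smul_mem _ _ hqW)) (by simp [hp1, hq1])
    (by simp [hp3, hq3])
  have h0 := congrFun hv' 0
  have h2 := congrFun hv' 2
  simp only [Pi.sub_apply, Pi.smul_apply, smul_eq_mul, Pi.zero_apply, hp0, hq2, hpq] at h0 h2
  exact mem_rulingL.2 ⟨by linear_combination h0, by linear_combination h2⟩

theorem exists_eq_rulingM (hW : finrank K W = 2) (hq : ∀ v ∈ W, v 0 * v 1 + v 2 * v 3 = 0)
    (hinj : ∀ v ∈ W, v 1 = 0 → v 2 = 0 → v = 0) : ∃ s, W = rulingM s := by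
  obtain ⟨p, hpW, hp1, hp2⟩ := exists_mem_apply_eq hW (.proj 1) (.proj 2) hinj 1 0
  obtain ⟨q, hqW, hq1, hq2⟩ := exists_mem_apply_eq hW (.proj 1) (.proj 2) hinj 0 1
  simp only [LinearMap.proj_apply] at hp1 hp2 hq1 hq2
  have hp0 : p 0 = 0 := by simpa [hp1, hp2] using hq p hpW
  have hq3 : q 3 = 0 := by simpa [hq1, hq2] using hq q hqW
  have hpq : p 3 = -q 0 := by
    have := hq (p + q) (add_mem hpW hqW)
    simp only [Pi.add_apply, hp0, hp1, hp2, hq1, hq2, hq3] at this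
    linear_combination this
  refine ⟨q 0, eq_of_le_of_finrank_eq (fun v hv => ?_) (by rw [hW, finrank_rulingM])⟩
  have hv' := hinj (v - v 1 • p - v 2 • q)
    (sub_mem (sub_mem hv (smul_mem _ _ hpW)) (smul_mem _ _ hqW)) (by simp [hp1, hq1])
    (by simp [hp2, hq2])
  have h0 := congrFun hv' 0
  have h3 := congrFun hv' 3
  simp only [Pi.sub_apply, Pi.smul_apply, smul_eq_mul, Pi.zero_apply, hp0, hq3, hpq] at h0 h3
  exact mem_rulingM.2 ⟨by linear_combination h0, by linear_combination h3⟩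

theorem eq_rulingL_or_eq_rulingM (hW : finrank K W = 2)
    (hq : ∀ v ∈ W, v 0 * v 1 + v 2 * v 3 = 0) (he₀ : ∀ v ∈ W, v 1 = 0 → v 2 = 0 → v 3 = 0 → v = 0) :
    (∃ s, W = rulingL s) ∨ ∃ s, W = rulingM s := by
  by_cases hL : ∀ v ∈ W, v 1 = 0 → v 3 = 0 → v = 0
  · exact .inl (exists_eq_rulingL hW hq hL)
  by_cases hM : ∀ v ∈ W, v 1 = 0 → v 2 = 0 → v = 0
  · exact .inr (exists_eq_rulingM hW hq hM)
  push Not at hL hM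
  obtain ⟨v, hv, hv1, hv3, hv0⟩ := hL
  obtain ⟨w, hw, hw1, hw2, hw0⟩ := hM
  have hvw : v 2 * w 3 = 0 := by simpa [hv1, hv3, hw1, hw2] using hq (v + w) (add_mem hv hw)
  rcases mul_eq_zero.1 hvw with h | h
  · exact absurd (he₀ v hv hv1 h hv3) hv0
  · exact absurd (he₀ w hw hw1 hw2 h) hw0

end Rulings

section Quartic

variable (A B C D E : ℂ)

theorem quarticF_of_mem_rulingL {s : ℂ} {v : Fin 4 → ℂ} (hv : v ∈ rulingL s) :
    quarticF A B C D E v = (A * s ^ 4 + E * s ^ 2 + A) * (v 1 ^ 4 + v 3 ^ 4)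
      + (D * s ^ 4 + (2 * C - B) * s ^ 2 + D) * (v 1 ^ 2 * v 3 ^ 2) := by
  obtain ⟨h0, h2⟩ := mem_rulingL.1 hv
  simp only [quarticF, h0, h2]
  ring

theorem quarticF_of_mem_rulingM {s : ℂ} {v : Fin 4 → ℂ} (hv : v ∈ rulingM s) :
    quarticF A B C D E v = (A * s ^ 4 + D * s ^ 2 + A) * (v 1 ^ 4 + v 2 ^ 4)
      + (E * s ^ 4 + (2 * C - B) * s ^ 2 + E) * (v 1 ^ 2 * v 2 ^ 2) := by
  obtain ⟨h0, h3⟩ := mem_rulingM.1 hv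
  simp only [quarticF, h0, h3]
  ring

variable {A B C D E}

theorem eq_zero_of_quarticF_eq_zero (hA : A ≠ 0) {v : Fin 4 → ℂ} (h1 : v 1 = 0) (h2 : v 2 = 0)
    (h3 : v 3 = 0) (hF : quarticF A B C D E v = 0) : v = 0 := by
  have hF' : A * v 0 ^ 4 = 0 := by simpa [quarticF, h1, h2, h3] using hF
  have h0 : v 0 = 0 := pow_eq_zero_iff (n := 4) four_ne_zero |>.1 ((mul_eq_zero.1 hF').resolve_left hA)
  funext i
  fin_cases i <;> assumption

theorem quarticF_eq_zero_on_rulingL_iff (h : A * B - 2 * A * C + D * E = 0) (hA : A ≠ 0) (s : ℂ) :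
    (∀ v ∈ rulingL s, quarticF A B C D E v = 0) ↔ A * s ^ 4 + E * s ^ 2 + A = 0 := by
  constructor
  · intro hF
    have hv : ![s, 0, 0, 1] ∈ rulingL s := mem_rulingL.2 (by simp)
    simpa [quarticF_of_mem_rulingL A B C D E hv] using hF _ hv
  · intro hs v hv
    have hcoeff : D * s ^ 4 + (2 * C - B) * s ^ 2 + D = 0 := by
      have : A * (D * s ^ 4 + (2 * C - B) * s ^ 2 + D) = 0 := by
        linear_combination D * hs - s ^ 2 * h
      simpa [hA] using this
    rw [quarticF_of_mem_rulingL A B C D E hv, hs, hcoeff]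
    ring

theorem quarticF_eq_zero_on_rulingM_iff (h : A * B - 2 * A * C + D * E = 0) (hA : A ≠ 0) (s : ℂ) :
    (∀ v ∈ rulingM s, quarticF A B C D E v = 0) ↔ A * s ^ 4 + D * s ^ 2 + A = 0 := by
  constructor
  · intro hF
    have hv : ![s, 0, 1, 0] ∈ rulingM s := mem_rulingM.2 (by simp)
    simpa [quarticF_of_mem_rulingM A B C D E hv] using hF _ hv
  · intro hs v hv
    have hcoeff : E * s ^ 4 + (2 * C - B) * s ^ 2 + E = 0 := by
      have : A * (E * s ^ 4 + (2 * C - B) * s ^ 2 + E) = 0 := by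
        linear_combination E * hs - s ^ 2 * h
      simpa [hA] using this
    rw [quarticF_of_mem_rulingM A B C D E hv, hs, hcoeff]
    ring

theorem setOf_lines_eq (h : A * B - 2 * A * C + D * E = 0) (hA : A ≠ 0) :
    {W : Submodule ℂ (Fin 4 → ℂ) | finrank ℂ W = 2 ∧
      (∀ v ∈ W, v 0 * v 1 + v 2 * v 3 = 0) ∧ ∀ v ∈ W, quarticF A B C D E v = 0} =
      rulingL '' {s | A * s ^ 4 + E * s ^ 2 + A = 0} ∪
        rulingM '' {s | A * s ^ 4 + D * s ^ 2 + A = 0} := by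
  ext W
  simp only [Set.mem_ofPred_eq, Set.mem_union, Set.mem_image]
  constructor
  · rintro ⟨hW, hq, hF⟩
    rcases eq_rulingL_or_eq_rulingM hW hq
        (fun v hv h1 h2 h3 => eq_zero_of_quarticF_eq_zero hA h1 h2 h3 (hF v hv)) with
      ⟨s, rfl⟩ | ⟨s, rfl⟩
    · exact .inl ⟨s, (quarticF_eq_zero_on_rulingL_iff h hA s).1 hF, rfl⟩
    · exact .inr ⟨s, (quarticF_eq_zero_on_rulingM_iff h hA s).1 hF, rfl⟩
  · rintro (⟨s, hs, rfl⟩ | ⟨s, hs, rfl⟩)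
    · exact ⟨finrank_rulingL s, fun v => isotropic_of_mem_rulingL,
        (quarticF_eq_zero_on_rulingL_iff h hA s).2 hs⟩
    · exact ⟨finrank_rulingM s, fun v => isotropic_of_mem_rulingM,
        (quarticF_eq_zero_on_rulingM_iff h hA s).2 hs⟩

end Quartic

end LinesOnQuadric

open LinesOnQuadric

/-- If `AB − 2AC + DE = 0`, `A ≠ 0`, `D² ≠ 4A²` and `E² ≠ 4A²`, then the surface
`X_{A,B,C,D,E}` contains exactly eight lines lying on the quadric
`Q₆ = {xy + zw = 0} ⊂ ℙ³(ℂ)`: there are exactly eight 2-dimensional `ℂ`-linear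
subspaces of `ℂ⁴` on which both `xy + zw` and `F_{A,B,C,D,E}` vanish identically. -/
theorem eight_lines_on_quadric (A B C D E : ℂ)
    (h : A * B - 2 * A * C + D * E = 0) (hA : A ≠ 0)
    (hD : D ^ 2 ≠ 4 * A ^ 2) (hE : E ^ 2 ≠ 4 * A ^ 2) :
    {W : Submodule ℂ (Fin 4 → ℂ) | Module.finrank ℂ W = 2 ∧
      (∀ v ∈ W, v 0 * v 1 + v 2 * v 3 = 0) ∧
      ∀ v ∈ W, quarticF A B C D E v = 0}.ncard = 8 := by
  have hroots : ∀ T : ℂ, T ^ 2 ≠ 4 * A ^ 2 → {s : ℂ | A * s ^ 4 + T * s ^ 2 + A = 0}.ncard = 4 :=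
    fun T hT => ncard_biquadratic_roots hA hA <| by
      rw [discrim]; contrapose! hT; linear_combination hT
  rw [setOf_lines_eq h hA, Set.ncard_union_eq (disjoint_image_rulingL_image_rulingM _ _)
    ((Set.finite_of_ncard_ne_zero (by rw [hroots E hE]; norm_num)).image _)
    ((Set.finite_of_ncard_ne_zero (by rw [hroots D hD]; norm_num)).image _),
    Set.ncard_image_of_injective _ rulingL_injective,
    Set.ncard_image_of_injective _ rulingM_injective, hroots E hE, hroots D hD]
end

section
/- Let A,C,D,E ∈ ℂ satisfy DE = 2AC, A ≠ 0, D² ≠ 4A² and E² ≠ 4A², and set B = 0. Then there are exactly eight 2-dimensional ℂ-linear subspaces W of ℂ⁴ on which both xy − zw and F_{A,0,C,D,E} vanish identically, exactly eight on which both xy + zw and F_{A,0,C,D,E} vanish identically, and no such W lies in both collections; consequently the surface X_{A,0,C,D,E} contains at least sixteen lines. -/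
/-- The set of lines (2-dimensional linear subspaces of `ℂ⁴`) lying on the surface
`{F_{A,0,C,D,E} = 0}` and on the quadric `Q₅ = {xy − zw = 0}`. -/
def linesOnQ₅ (A C D E : ℂ) : Set (Submodule ℂ (Fin 4 → ℂ)) :=
  {W | Module.finrank ℂ W = 2 ∧ (∀ v ∈ W, v 0 * v 1 - v 2 * v 3 = 0) ∧
    ∀ v ∈ W, quarticF A 0 C D E v = 0}

/-- The set of lines (2-dimensional linear subspaces of `ℂ⁴`) lying on the surface
`{F_{A,0,C,D,E} = 0}` and on the quadric `Q₆ = {xy + zw = 0}`. -/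
def linesOnQ₆ (A C D E : ℂ) : Set (Submodule ℂ (Fin 4 → ℂ)) :=
  {W | Module.finrank ℂ W = 2 ∧ (∀ v ∈ W, v 0 * v 1 + v 2 * v 3 = 0) ∧
    ∀ v ∈ W, quarticF A 0 C D E v = 0}

/-!
Every line on the smooth quadric `Q₅` belongs to one of its two rulings,
`lineL s = {x = s w, z = s y}` and `lineM u = {x = u z, w = u y}`, or passes through
`[1:0:0:0]`, where `F = A ≠ 0`. On `lineL s` the quartic restricts to
`(y⁴ + w⁴)(A s⁴ + E s² + A) + y² w² (D s⁴ + 2 C s² + D)`, and `DE = 2AC` makes the second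
factor a multiple of the first, so the lines of this ruling on `X` correspond to the roots of
`A s⁴ + E s² + A`. As a quadratic in `s²` with discriminant `E² - 4A²` and no root `0`, it has
four distinct roots; likewise for `lineM` with `D`. The reflection `z ↦ -z` preserves `F` and
carries `Q₅` to `Q₆`, giving eight more lines, and no line lies on both quadrics because
`xy + zw` does not vanish on `lineL s` or `lineM u` for `s, u ≠ 0`.
-/

open Module Submodule

section LinearAlgebra

variable {K V : Type*} [Field K] [AddCommGroup V] [Module K V]

theorem finrank_span_pair_of_apply {ι : Type*} {a b : ι → K} {i j : ι} (hai : a i = 1)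
    (haj : a j = 0) (hbi : b i = 0) (hbj : b j = 1) : finrank K (span K {a, b}) = 2 := by
  have hli : LinearIndependent K ![a, b] := by
    refine LinearIndependent.pair_iff.2 fun x y hxy => ⟨?_, ?_⟩
    · simpa [hai, hbi] using congrFun hxy i
    · simpa [haj, hbj] using congrFun hxy j
  rw [← Matrix.range_cons_cons_empty a b ![], finrank_span_eq_card hli, Fintype.card_fin]

theorem single_mem_of_apply_eq_zero {ι : Type*} [DecidableEq ι] {W : Submodule K (ι → K)}
    {c : ι → K} (hc : c ∈ W) {i : ι} (hci : c i ≠ 0) (h : ∀ j ≠ i, c j = 0) :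
    Pi.single i 1 ∈ W := by
  convert W.smul_mem (c i)⁻¹ hc using 1
  ext j
  rcases eq_or_ne j i with rfl | hj
  · simp [hci]
  · simp [hj, h j hj]

theorem image_map_setOf_finrank_eq {n : ℕ} (σ : V ≃ₗ[K] V) (P Q : V → Prop) :
    map (σ : V →ₗ[K] V) ''
        {W : Submodule K V | finrank K W = n ∧ (∀ v ∈ W, P (σ v)) ∧ ∀ v ∈ W, Q (σ v)} =
      {W : Submodule K V | finrank K W = n ∧ (∀ v ∈ W, P v) ∧ ∀ v ∈ W, Q v} := by
  ext W
  constructor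
  · rintro ⟨W, ⟨hn, hP, hQ⟩, rfl⟩
    refine ⟨hn ▸ σ.finrank_map_eq W, ?_, ?_⟩ <;> rintro - ⟨v, hv, rfl⟩
    exacts [hP v hv, hQ v hv]
  · rintro ⟨hn, hP, hQ⟩
    refine ⟨comap (σ : V →ₗ[K] V) W, ⟨?_, fun v hv => hP _ hv, fun v hv => hQ _ hv⟩,
      map_comap_eq_of_surjective σ.surjective W⟩
    rw [comap_equiv_eq_map_symm, σ.symm.finrank_map_eq, hn]

end LinearAlgebra

noncomputable def lineL (s : ℂ) : Submodule ℂ (Fin 4 → ℂ) := span ℂ {![s, 0, 0, 1], ![0, 1, s, 0]}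

noncomputable def lineM (u : ℂ) : Submodule ℂ (Fin 4 → ℂ) := span ℂ {![u, 0, 1, 0], ![0, 1, 0, u]}

theorem mem_lineL {s : ℂ} {v : Fin 4 → ℂ} : v ∈ lineL s ↔ v 0 = s * v 3 ∧ v 2 = s * v 1 := by
  rw [lineL, mem_span_pair]
  constructor
  · rintro ⟨a, b, rfl⟩
    simp [mul_comm]
  · rintro ⟨h0, h2⟩
    exact ⟨v 3, v 1, by ext i; fin_cases i <;> simp [h0, h2, mul_comm]⟩

theorem mem_lineM {u : ℂ} {v : Fin 4 → ℂ} : v ∈ lineM u ↔ v 0 = u * v 2 ∧ v 3 = u * v 1 := by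
  rw [lineM, mem_span_pair]
  constructor
  · rintro ⟨a, b, rfl⟩
    simp [mul_comm]
  · rintro ⟨h0, h3⟩
    exact ⟨v 2, v 1, by ext i; fin_cases i <;> simp [h0, h3, mul_comm]⟩

theorem finrank_lineL (s : ℂ) : finrank ℂ (lineL s) = 2 :=
  finrank_span_pair_of_apply (i := 3) (j := 1) rfl rfl rfl rfl

theorem finrank_lineM (u : ℂ) : finrank ℂ (lineM u) = 2 :=
  finrank_span_pair_of_apply (i := 2) (j := 1) rfl rfl rfl rfl

theorem lineL_injective : Function.Injective lineL := fun s t hst => by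
  have h : ![s, 0, 0, 1] ∈ lineL t := hst ▸ mem_lineL.2 (by simp)
  simpa using (mem_lineL.1 h).1

theorem lineM_injective : Function.Injective lineM := fun s t hst => by
  have h : ![s, 0, 1, 0] ∈ lineM t := hst ▸ mem_lineM.2 (by simp)
  simpa using (mem_lineM.1 h).1

theorem lineL_ne_lineM (s u : ℂ) : lineL s ≠ lineM u := fun h => by
  have hu : ![u, 0, 1, 0] ∈ lineL s := h ▸ mem_lineM.2 (by simp)
  simpa using (mem_lineL.1 hu).2

section Classification

variable {W : Submodule ℂ (Fin 4 → ℂ)}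

theorem polar_eq_zero_of_isotropic (hq : ∀ v ∈ W, v 0 * v 1 - v 2 * v 3 = 0) {u v : Fin 4 → ℂ}
    (hu : u ∈ W) (hv : v ∈ W) : u 0 * v 1 + u 1 * v 0 - u 2 * v 3 - u 3 * v 2 = 0 := by
  have huv := hq (u + v) (add_mem hu hv)
  simp only [Pi.add_apply] at huv
  linear_combination huv - hq u hu - hq v hv

theorem eq_lineL_or_single_mem (h2 : finrank ℂ W = 2) (hq : ∀ v ∈ W, v 0 * v 1 - v 2 * v 3 = 0)
    {s : ℂ} (hs : ![s, 0, 0, 1] ∈ W) : W = lineL s ∨ Pi.single 0 1 ∈ W := by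
  have h2s : ∀ v ∈ W, v 2 = s * v 1 := fun v hv => by
    have h := polar_eq_zero_of_isotropic hq hv hs
    simp only [Matrix.cons_val] at h
    linear_combination -h
  by_cases hL : ∀ v ∈ W, v 0 = s * v 3
  · exact .inl <| eq_of_le_of_finrank_le (fun v hv => mem_lineL.2 ⟨hL v hv, h2s v hv⟩)
      (by rw [h2, finrank_lineL])
  obtain ⟨w, hw, hw0⟩ := not_forall₂.1 hL
  have hw1 : w 1 = 0 := by
    have hqw := hq w hw
    rw [h2s w hw] at hqw
    exact (mul_eq_zero.1 (by linear_combination hqw)).resolve_right (sub_ne_zero.2 hw0)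
  refine .inr <| single_mem_of_apply_eq_zero (sub_mem hw (W.smul_mem (w 3) hs)) (i := 0)
    (by simpa [sub_eq_zero, mul_comm] using hw0) fun j hj => ?_
  fin_cases j <;> simp_all

theorem eq_lineM_or_single_mem (h2 : finrank ℂ W = 2) (hq : ∀ v ∈ W, v 0 * v 1 - v 2 * v 3 = 0)
    {u : ℂ} (hu : ![u, 0, 1, 0] ∈ W) : W = lineM u ∨ Pi.single 0 1 ∈ W := by
  have h3u : ∀ v ∈ W, v 3 = u * v 1 := fun v hv => by
    have h := polar_eq_zero_of_isotropic hq hv hu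
    simp only [Matrix.cons_val] at h
    linear_combination -h
  by_cases hM : ∀ v ∈ W, v 0 = u * v 2
  · exact .inl <| eq_of_le_of_finrank_le (fun v hv => mem_lineM.2 ⟨hM v hv, h3u v hv⟩)
      (by rw [h2, finrank_lineM])
  obtain ⟨w, hw, hw0⟩ := not_forall₂.1 hM
  have hw1 : w 1 = 0 := by
    have hqw := hq w hw
    rw [h3u w hw] at hqw
    exact (mul_eq_zero.1 (by linear_combination hqw)).resolve_right (sub_ne_zero.2 hw0)
  refine .inr <| single_mem_of_apply_eq_zero (sub_mem hw (W.smul_mem (w 2) hu)) (i := 0)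
    (by simpa [sub_eq_zero, mul_comm] using hw0) fun j hj => ?_
  fin_cases j <;> simp_all

theorem eq_lineL_or_eq_lineM_or_single_mem (h2 : finrank ℂ W = 2)
    (hq : ∀ v ∈ W, v 0 * v 1 - v 2 * v 3 = 0) :
    (∃ s, W = lineL s) ∨ (∃ u, W = lineM u) ∨ Pi.single 0 1 ∈ W := by
  obtain ⟨⟨c, hc⟩, hc1, hc0⟩ := exists_mem_ne_zero_of_ne_bot <|
    LinearMap.ker_ne_bot_of_finrank_lt (f := (LinearMap.proj 1).comp W.subtype) (by simp [h2])
  replace hc1 : c 1 = 0 := hc1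
  replace hc0 : c ≠ 0 := fun h => hc0 (Subtype.ext h)
  have hc23 : c 2 * c 3 = 0 := by simpa [hc1] using hq c hc
  by_cases hc3 : c 3 = 0
  · by_cases hc2 : c 2 = 0
    · refine .inr <| .inr <| single_mem_of_apply_eq_zero hc (i := 0) (fun h => hc0 ?_) ?_
      · ext j; fin_cases j <;> simp [h, hc1, hc2, hc3]
      · intro j hj; fin_cases j <;> simp_all
    · have hu : ![c 0 / c 2, 0, 1, 0] = (c 2)⁻¹ • c := by
        ext j; fin_cases j <;> simp [hc1, hc2, hc3, div_eq_inv_mul]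
      exact .inr <| (eq_lineM_or_single_mem h2 hq (hu ▸ W.smul_mem _ hc)).imp_left (⟨_, ·⟩)
  · have hc2 : c 2 = 0 := (mul_eq_zero.1 hc23).resolve_right hc3
    have hs : ![c 0 / c 3, 0, 0, 1] = (c 3)⁻¹ • c := by
      ext j; fin_cases j <;> simp [hc1, hc2, hc3, div_eq_inv_mul]
    exact (eq_lineL_or_single_mem h2 hq (hs ▸ W.smul_mem _ hc)).imp (⟨_, ·⟩) .inr

end Classification

section Quartic

variable {A C D E : ℂ}

theorem lineL_mem_linesOnQ₅_iff (h : D * E = 2 * A * C) (hA : A ≠ 0) {s : ℂ} :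
    lineL s ∈ linesOnQ₅ A C D E ↔ A * s ^ 4 + E * s ^ 2 + A = 0 := by
  constructor
  · rintro ⟨-, -, hF⟩
    have h0 := hF ![s, 0, 0, 1] (mem_lineL.2 (by simp))
    simp only [quarticF, Matrix.cons_val] at h0
    linear_combination h0
  · intro hs
    have hD : D * s ^ 4 + 2 * C * s ^ 2 + D = 0 :=
      mul_left_cancel₀ hA (by linear_combination D * hs - s ^ 2 * h)
    refine ⟨finrank_lineL s, fun v hv => ?_, fun v hv => ?_⟩ <;>
      obtain ⟨h0, h2⟩ := mem_lineL.1 hv <;> simp only [quarticF, h0, h2]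
    · ring
    · linear_combination (v 1 ^ 4 + v 3 ^ 4) * hs + v 1 ^ 2 * v 3 ^ 2 * hD

theorem lineM_mem_linesOnQ₅_iff (h : D * E = 2 * A * C) (hA : A ≠ 0) {u : ℂ} :
    lineM u ∈ linesOnQ₅ A C D E ↔ A * u ^ 4 + D * u ^ 2 + A = 0 := by
  constructor
  · rintro ⟨-, -, hF⟩
    have h0 := hF ![u, 0, 1, 0] (mem_lineM.2 (by simp))
    simp only [quarticF, Matrix.cons_val] at h0
    linear_combination h0
  · intro hu
    have hE : E * u ^ 4 + 2 * C * u ^ 2 + E = 0 :=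
      mul_left_cancel₀ hA (by linear_combination E * hu - u ^ 2 * h)
    refine ⟨finrank_lineM u, fun v hv => ?_, fun v hv => ?_⟩ <;>
      obtain ⟨h0, h3⟩ := mem_lineM.1 hv <;> simp only [quarticF, h0, h3]
    · ring
    · linear_combination (v 1 ^ 4 + v 2 ^ 4) * hu + v 1 ^ 2 * v 2 ^ 2 * hE

theorem linesOnQ₅_eq (h : D * E = 2 * A * C) (hA : A ≠ 0) :
    linesOnQ₅ A C D E = lineL '' {s | A * s ^ 4 + E * s ^ 2 + A = 0} ∪
      lineM '' {u | A * u ^ 4 + D * u ^ 2 + A = 0} := by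
  ext W
  constructor
  · intro hW
    rcases eq_lineL_or_eq_lineM_or_single_mem hW.1 hW.2.1 with ⟨s, rfl⟩ | ⟨u, rfl⟩ | h0
    · exact .inl ⟨s, (lineL_mem_linesOnQ₅_iff h hA).1 hW, rfl⟩
    · exact .inr ⟨u, (lineM_mem_linesOnQ₅_iff h hA).1 hW, rfl⟩
    · exact absurd (hW.2.2 _ h0) (by simpa [quarticF] using hA)
  · rintro (⟨s, hs, rfl⟩ | ⟨u, hu, rfl⟩)
    exacts [(lineL_mem_linesOnQ₅_iff h hA).2 hs, (lineM_mem_linesOnQ₅_iff h hA).2 hu]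

end Quartic

theorem setOf_sq_eq_sq (p : ℂ) : {s : ℂ | s ^ 2 = p ^ 2} = {p, -p} := by
  ext s
  simp [sq_eq_sq_iff_eq_or_eq_neg]

theorem ncard_setOf_quartic_eq_zero {A G : ℂ} (hA : A ≠ 0) (hG : G ^ 2 ≠ 4 * A ^ 2) :
    {s : ℂ | A * s ^ 4 + G * s ^ 2 + A = 0}.ncard = 4 := by
  obtain ⟨d, hd⟩ := IsAlgClosed.exists_pow_nat_eq (discrim A G A) two_pos
  obtain ⟨p, hp⟩ := IsAlgClosed.exists_pow_nat_eq ((-G + d) / (2 * A)) two_pos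
  obtain ⟨q, hq⟩ := IsAlgClosed.exists_pow_nat_eq ((-G - d) / (2 * A)) two_pos
  have hroots : {s : ℂ | A * s ^ 4 + G * s ^ 2 + A = 0} =
      {s | s ^ 2 = p ^ 2} ∪ {s | s ^ 2 = q ^ 2} := by
    ext s
    change A * s ^ 4 + G * s ^ 2 + A = 0 ↔ s ^ 2 = p ^ 2 ∨ s ^ 2 = q ^ 2
    rw [hp, hq, ← quadratic_eq_zero_iff hA (by rw [← sq, hd]) (s ^ 2)]
    constructor <;> intro h <;> linear_combination h
  have hp0 : p ≠ 0 := by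
    rintro rfl
    have := (Set.ext_iff.1 hroots 0).2 (.inl (by simp))
    exact hA (by simpa using this)
  have hq0 : q ≠ 0 := by
    rintro rfl
    have := (Set.ext_iff.1 hroots 0).2 (.inr (by simp))
    exact hA (by simpa using this)
  have hpq : p ^ 2 ≠ q ^ 2 := by
    rw [hp, hq]
    intro h
    have hd0 : d = 0 := by
      field_simp at h
      linear_combination h / 2
    apply hG
    rw [discrim, hd0] at hd
    linear_combination -hd
  have hdisj : Disjoint ({p, -p} : Set ℂ) {q, -q} := by
    rw [← setOf_sq_eq_sq, ← setOf_sq_eq_sq]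
    exact Set.disjoint_left.2 fun s h1 h2 => hpq (h1.symm.trans h2)
  rw [hroots, setOf_sq_eq_sq, setOf_sq_eq_sq, Set.ncard_union_eq hdisj,
    Set.ncard_pair (self_ne_neg.2 hp0), Set.ncard_pair (self_ne_neg.2 hq0)]

section Lines

variable {A C D E : ℂ}

theorem ncard_linesOnQ₅ (h : D * E = 2 * A * C) (hA : A ≠ 0) (hD : D ^ 2 ≠ 4 * A ^ 2)
    (hE : E ^ 2 ≠ 4 * A ^ 2) : (linesOnQ₅ A C D E).ncard = 8 := by
  have hrootsE := ncard_setOf_quartic_eq_zero hA hE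
  have hrootsD := ncard_setOf_quartic_eq_zero hA hD
  have hdisj : Disjoint (lineL '' {s | A * s ^ 4 + E * s ^ 2 + A = 0})
      (lineM '' {u | A * u ^ 4 + D * u ^ 2 + A = 0}) := by
    rintro S hL hM W hW
    obtain ⟨s, -, hs⟩ := hL hW
    obtain ⟨u, -, hu⟩ := hM hW
    exact lineL_ne_lineM s u (hs.trans hu.symm)
  rw [linesOnQ₅_eq h hA, Set.ncard_union_eq hdisj
      ((Set.finite_of_ncard_ne_zero (by simp [hrootsE])).image _)
      ((Set.finite_of_ncard_ne_zero (by simp [hrootsD])).image _),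
    Set.ncard_image_of_injective _ lineL_injective, Set.ncard_image_of_injective _ lineM_injective,
    hrootsE, hrootsD]

noncomputable def reflectZ : (Fin 4 → ℂ) ≃ₗ[ℂ] (Fin 4 → ℂ) :=
  LinearEquiv.piCongrRight fun i => if i = 2 then LinearEquiv.neg ℂ else LinearEquiv.refl ℂ ℂ

theorem reflectZ_apply (v : Fin 4 → ℂ) : reflectZ v = ![v 0, v 1, -v 2, v 3] := by
  ext i
  fin_cases i <;> simp [reflectZ]

theorem linesOnQ₆_eq_image :
    linesOnQ₆ A C D E = map (reflectZ : _ →ₗ[ℂ] _) '' linesOnQ₅ A C D E := by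
  have hq (v : Fin 4 → ℂ) : reflectZ v 0 * reflectZ v 1 + reflectZ v 2 * reflectZ v 3 =
      v 0 * v 1 - v 2 * v 3 := by
    simp only [reflectZ_apply, Matrix.cons_val]
    ring
  have hF (v : Fin 4 → ℂ) : quarticF A 0 C D E (reflectZ v) = quarticF A 0 C D E v := by
    simp only [quarticF, reflectZ_apply, Matrix.cons_val]
    ring
  rw [linesOnQ₆, ← image_map_setOf_finrank_eq reflectZ (fun v => v 0 * v 1 + v 2 * v 3 = 0)
    (quarticF A 0 C D E · = 0)]
  simp only [hq, hF]
  rfl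

theorem disjoint_linesOnQ₅_linesOnQ₆ (h : D * E = 2 * A * C) (hA : A ≠ 0) :
    Disjoint (linesOnQ₅ A C D E) (linesOnQ₆ A C D E) := by
  rw [Set.disjoint_left, linesOnQ₅_eq h hA]
  rintro _ (⟨s, hs, rfl⟩ | ⟨u, hu, rfl⟩) ⟨-, hq, -⟩
  · obtain rfl : s = 0 := by simpa using hq ![s, 1, s, 1] (mem_lineL.2 (by simp))
    exact hA (by simpa using hs)
  · obtain rfl : u = 0 := by simpa using hq ![u, 1, 1, u] (mem_lineM.2 (by simp))
    exact hA (by simpa using hu)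

end Lines

/-- If `DE = 2AC`, `A ≠ 0`, `D² ≠ 4A²` and `E² ≠ 4A²`, then the surface `X_{A,0,C,D,E}`
contains exactly eight lines lying on `Q₅ = {xy − zw = 0}`, exactly eight lines lying on
`Q₆ = {xy + zw = 0}`, and no line lies on both quadrics; consequently the surface
contains at least sixteen lines. -/
theorem sixteen_lines (A C D E : ℂ) (h : D * E = 2 * A * C) (hA : A ≠ 0)
    (hD : D ^ 2 ≠ 4 * A ^ 2) (hE : E ^ 2 ≠ 4 * A ^ 2) :
    (linesOnQ₅ A C D E).ncard = 8 ∧ (linesOnQ₆ A C D E).ncard = 8 ∧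
      Disjoint (linesOnQ₅ A C D E) (linesOnQ₆ A C D E) ∧
      ∃ S : Set (Submodule ℂ (Fin 4 → ℂ)), S.Finite ∧ S.ncard = 16 ∧
        S ⊆ {W | Module.finrank ℂ W = 2 ∧ ∀ v ∈ W, quarticF A 0 C D E v = 0} := by
  have h₅ : (linesOnQ₅ A C D E).ncard = 8 := ncard_linesOnQ₅ h hA hD hE
  have h₆ : (linesOnQ₆ A C D E).ncard = 8 := by
    rw [linesOnQ₆_eq_image,
      Set.ncard_image_of_injective _ (map_injective_of_injective reflectZ.injective), h₅]
  have hdisj := disjoint_linesOnQ₅_linesOnQ₆ h hA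
  have hfin₅ := Set.finite_of_ncard_ne_zero (h₅ ▸ by norm_num : (linesOnQ₅ A C D E).ncard ≠ 0)
  have hfin₆ := Set.finite_of_ncard_ne_zero (h₆ ▸ by norm_num : (linesOnQ₆ A C D E).ncard ≠ 0)
  refine ⟨h₅, h₆, hdisj, _, hfin₅.union hfin₆,
    by rw [Set.ncard_union_eq hdisj hfin₅ hfin₆, h₅, h₆], ?_⟩
  rintro W (⟨h2, -, hF⟩ | ⟨h2, -, hF⟩) <;> exact ⟨h2, hF⟩
end

section
/- There are exactly 48 two-dimensional ℂ-linear subspaces W of ℂ⁴ on which the polynomial x⁴ + y⁴ + z⁴ + w⁴ vanishes identically; that is, the Fermat quartic surface {x⁴ + y⁴ + z⁴ + w⁴ = 0} ⊂ ℙ³(ℂ) contains exactly 48 lines. -/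
/-!
Let `W` be a line on the Fermat quartic. If `W` meets the plane `x₀ = x₁ = 0` in some `w ≠ 0`,
then `w ∝ (0, 0, 1, β)` with `β⁴ = -1`; a vector `u ∈ W` with `u₂ = 0` then has `u₃ = 0`, because
the `s t³`-coefficient of the quartic on `s u + t w` is `4 u₃ w₃³`, so `u ∝ (1, α, 0, 0)` with
`α⁴ = -1`. Otherwise `W` has an echelon basis `(1, 0, a, b)`, `(0, 1, c, d)`, and the five
coefficients of the quartic on the pencil `s u + t v` must vanish. The identity
`(a c³ + b d³)(a³ c + b³ d) - (a² c² + b² d²)² = a b c d (a d - b c)²` forces `b = c = 0` or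
`a = d = 0`, the two nonzero entries being fourth roots of `-1`. So every line is one of
`3 · 4 · 4 = 48` distinct lines: a splitting of the coordinates into two pairs, and in each pair
one coordinate a fourth root of `-1` times the other.
-/

open Module Submodule Polynomial

lemma eq_zero_iff_of_pow_four_add_pow_four_eq_zero {R : Type*} [CommRing R] [IsDomain R]
    {x y : R} (h : x ^ 4 + y ^ 4 = 0) : x = 0 ↔ y = 0 := by
  constructor <;> rintro rfl <;> simpa using h

lemma div_pow_four_eq_neg_one {K : Type*} [Field K] {x y : K} (hx : x ≠ 0)
    (h : x ^ 4 + y ^ 4 = 0) : (y / x) ^ 4 = -1 := by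
  rw [div_pow, div_eq_iff (pow_ne_zero 4 hx)]
  linear_combination h

lemma sum_pow_four_coeffs_eq_zero {K ι : Type*} [Field K] [CharZero K] [Fintype ι]
    {u v : ι → K} (h : ∀ s t : K, ∑ i, (s * u i + t * v i) ^ 4 = 0) :
    ∑ i, u i ^ 4 = 0 ∧ ∑ i, u i ^ 3 * v i = 0 ∧ ∑ i, u i ^ 2 * v i ^ 2 = 0 ∧
      ∑ i, u i * v i ^ 3 = 0 ∧ ∑ i, v i ^ 4 = 0 := by
  have expand (s t : K) : ∑ i, (s * u i + t * v i) ^ 4 =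
      s ^ 4 * ∑ i, u i ^ 4 + 4 * s ^ 3 * t * ∑ i, u i ^ 3 * v i +
        6 * s ^ 2 * t ^ 2 * ∑ i, u i ^ 2 * v i ^ 2 + 4 * s * t ^ 3 * ∑ i, u i * v i ^ 3 +
        t ^ 4 * ∑ i, v i ^ 4 := by
    simp only [Finset.mul_sum, ← Finset.sum_add_distrib]
    exact Finset.sum_congr rfl fun i _ => by ring
  have h10 := h 1 0
  have h01 := h 0 1
  have h11 := h 1 1
  have h1m := h 1 (-1)
  have h12 := h 1 2
  rw [expand] at h10 h01 h11 h1m h12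
  refine ⟨by linear_combination h10, ?_, ?_, ?_, by linear_combination h01⟩
  · linear_combination (6 * h11 - 2 * h1m - h12 - 3 * h10 + 12 * h01) / 24
  · linear_combination (h11 + h1m - 2 * h10 - 2 * h01) / 12
  · linear_combination (h12 + 3 * h10 - 12 * h01 - 3 * h11 - h1m) / 24

lemma fermat_pencil_dichotomy {R : Type*} [CommRing R] [IsDomain R] {a b c d : R}
    (h40 : 1 + a ^ 4 + b ^ 4 = 0) (h31 : a ^ 3 * c + b ^ 3 * d = 0)
    (h22 : a ^ 2 * c ^ 2 + b ^ 2 * d ^ 2 = 0) (h04 : 1 + c ^ 4 + d ^ 4 = 0) :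
    (b = 0 ∧ c = 0 ∧ a ^ 4 = -1 ∧ d ^ 4 = -1) ∨ (a = 0 ∧ d = 0 ∧ b ^ 4 = -1 ∧ c ^ 4 = -1) := by
  have key : a * b * c * d * (a * d - b * c) ^ 2 = 0 := by
    linear_combination (a * c ^ 3 + b * d ^ 3) * h31 - (a ^ 2 * c ^ 2 + b ^ 2 * d ^ 2) * h22
  have left (h : b = 0 ∨ c = 0) : b = 0 ∧ c = 0 ∧ a ^ 4 = -1 ∧ d ^ 4 = -1 := by
    rcases h with rfl | rfl <;> grind [pow_eq_zero_iff]
  have right (h : a = 0 ∨ d = 0) : a = 0 ∧ d = 0 ∧ b ^ 4 = -1 ∧ c ^ 4 = -1 := by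
    rcases h with rfl | rfl <;> grind [pow_eq_zero_iff]
  rcases mul_eq_zero.1 key with h | h
  · simp only [mul_eq_zero] at h
    rcases h with ((ha | hb) | hc) | hd
    exacts [.inr (right (.inl ha)), .inl (left (.inl hb)), .inl (left (.inr hc)),
      .inr (right (.inr hd))]
  · have hc : c = 0 := by
      linear_combination c * h40 - a * h31 + b ^ 3 * (pow_eq_zero_iff two_ne_zero).1 h
    exact .inl (left (.inr hc))

lemma span_pair_le {R M : Type*} [Semiring R] [AddCommMonoid M] [Module R M]
    {p : Submodule R M} {x y : M} (hx : x ∈ p) (hy : y ∈ p) : span R {x, y} ≤ p :=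
  span_le.2 (Set.pair_subset hx hy)

lemma finrank_span_pair_of_apply_s2 {K ι : Type*} [Field K] {u v : ι → K} {i j : ι}
    (hui : u i = 1) (huj : u j = 0) (hvi : v i = 0) (hvj : v j = 1) :
    finrank K (span K {u, v}) = 2 := by
  have hli : LinearIndependent K ![u, v] := by
    refine LinearIndependent.pair_iff.2 fun s t hst => ⟨?_, ?_⟩
    · simpa [hui, hvi] using congrFun hst i
    · simpa [huj, hvj] using congrFun hst j
  rw [← Matrix.range_cons_cons_empty u v ![], finrank_span_eq_card hli, Fintype.card_fin]

lemma exists_mem_apply_eq_of_finrank_eq_two {K ι : Type*} [Field K] [Finite ι]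
    {W : Submodule K (ι → K)} (hW : finrank K W = 2) {i j : ι}
    (h : ∀ w ∈ W, w i = 0 → w j = 0 → w = 0) :
    ∃ u ∈ W, ∃ v ∈ W, u i = 1 ∧ u j = 0 ∧ v i = 0 ∧ v j = 1 := by
  let f : W →ₗ[K] K × K := (LinearMap.proj i).prod (LinearMap.proj j) ∘ₗ W.subtype
  have hinj : Function.Injective f := by
    rw [← LinearMap.ker_eq_bot, LinearMap.ker_eq_bot']
    intro w hw
    simp only [Prod.ext_iff] at hw
    exact Subtype.ext (h w w.2 hw.1 hw.2)
  have hsurj : Function.Surjective f :=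
    (LinearMap.injective_iff_surjective_of_finrank_eq_finrank (by simp [hW])).1 hinj
  obtain ⟨u, hu⟩ := hsurj (1, 0)
  obtain ⟨v, hv⟩ := hsurj (0, 1)
  simp only [Prod.ext_iff] at hu hv
  exact ⟨u, u.2, v, v.2, hu.1, hu.2, hv.1, hv.2⟩

lemma exists_ne_zero_mem_apply_eq_zero {K ι : Type*} [Field K] [Finite ι]
    {W : Submodule K (ι → K)} (hW : 1 < finrank K W) (i : ι) : ∃ u ∈ W, u ≠ 0 ∧ u i = 0 := by
  have hker := LinearMap.ker_ne_bot_of_finrank_lt (f := LinearMap.proj i ∘ₗ W.subtype)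
    (by rwa [finrank_self])
  obtain ⟨u, hu, hu0⟩ := (Submodule.ne_bot_iff _).1 hker
  exact ⟨u, u.2, by simpa using hu0, hu⟩

/-- The family `k` pairs `x₀` with `x_{k+1}` and the two remaining coordinates with each other. -/
noncomputable def fermatLine : Fin 3 → ℂ → ℂ → Submodule ℂ (Fin 4 → ℂ)
  | 0, α, β => span ℂ {![1, α, 0, 0], ![0, 0, 1, β]}
  | 1, α, β => span ℂ {![1, 0, α, 0], ![0, 1, 0, β]}
  | 2, α, β => span ℂ {![1, 0, 0, α], ![0, 1, β, 0]}

lemma finrank_fermatLine (k : Fin 3) (α β : ℂ) : finrank ℂ (fermatLine k α β) = 2 := by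
  fin_cases k
  exacts [finrank_span_pair_of_apply_s2 (i := 0) (j := 2) rfl rfl rfl rfl,
    finrank_span_pair_of_apply_s2 (i := 0) (j := 1) rfl rfl rfl rfl,
    finrank_span_pair_of_apply_s2 (i := 0) (j := 1) rfl rfl rfl rfl]

lemma eq_of_fermatLine_eq {k k' : Fin 3} {α β α' β' : ℂ} (hα' : α' ≠ 0)
    (h : fermatLine k α β = fermatLine k' α' β') : k = k' ∧ α = α' ∧ β = β' := by
  fin_cases k <;> fin_cases k' <;> simp only [fermatLine] at h <;>
  · obtain ⟨h1, h2⟩ := Set.pair_subset_iff.1 (span_le.1 h.le)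
    rw [SetLike.mem_coe, mem_span_pair] at h1 h2
    obtain ⟨s, t, hst⟩ := h1
    obtain ⟨s', t', hst'⟩ := h2
    simp [funext_iff, Fin.forall_fin_succ] at hst hst'
    grind

def IsFermatLine (W : Submodule ℂ (Fin 4 → ℂ)) : Prop :=
  finrank ℂ W = 2 ∧ ∀ v ∈ W, v 0 ^ 4 + v 1 ^ 4 + v 2 ^ 4 + v 3 ^ 4 = 0

lemma isFermatLine_fermatLine (k : Fin 3) {α β : ℂ} (hα : α ^ 4 = -1) (hβ : β ^ 4 = -1) :
    IsFermatLine (fermatLine k α β) := by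
  refine ⟨finrank_fermatLine k α β, fun v hv => ?_⟩
  fin_cases k <;> obtain ⟨s, t, rfl⟩ := mem_span_pair.1 hv <;> simp <;>
    linear_combination s ^ 4 * hα + t ^ 4 * hβ

namespace IsFermatLine

variable {W : Submodule ℂ (Fin 4 → ℂ)}

lemma fermatLine_eq_of_le (hW : IsFermatLine W) {k : Fin 3} {α β : ℂ}
    (h : fermatLine k α β ≤ W) : fermatLine k α β = W :=
  eq_of_le_of_finrank_eq h (by rw [finrank_fermatLine, hW.1])

lemma pencil_coeffs_eq_zero (hW : IsFermatLine W) {u v : Fin 4 → ℂ} (hu : u ∈ W) (hv : v ∈ W) :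
    ∑ i, u i ^ 4 = 0 ∧ ∑ i, u i ^ 3 * v i = 0 ∧ ∑ i, u i ^ 2 * v i ^ 2 = 0 ∧
      ∑ i, u i * v i ^ 3 = 0 ∧ ∑ i, v i ^ 4 = 0 :=
  sum_pow_four_coeffs_eq_zero fun s t => by
    simpa [Fin.sum_univ_four] using hW.2 _ (W.add_mem (W.smul_mem s hu) (W.smul_mem t hv))

lemma exists_eq_fermatLine_of_pivots (hW : IsFermatLine W) {u v : Fin 4 → ℂ} (hu : u ∈ W)
    (hv : v ∈ W) (hu0 : u 0 = 1) (hu1 : u 1 = 0) (hv0 : v 0 = 0) (hv1 : v 1 = 1) :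
    ∃ k α β, α ^ 4 = -1 ∧ β ^ 4 = -1 ∧ fermatLine k α β = W := by
  obtain ⟨h40, h31, h22, -, h04⟩ := hW.pencil_coeffs_eq_zero hu hv
  simp only [Fin.sum_univ_four, hu0, hu1, hv0, hv1] at h40 h31 h22 h04
  rcases fermat_pencil_dichotomy (a := u 2) (b := u 3) (c := v 2) (d := v 3)
    (by linear_combination h40) (by linear_combination h31) (by linear_combination h22)
    (by linear_combination h04) with
    ⟨hb, hc, hα, hβ⟩ | ⟨ha, hd, hα, hβ⟩
  · refine ⟨1, u 2, v 3, hα, hβ, hW.fermatLine_eq_of_le (span_pair_le ?_ ?_)⟩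
    · convert hu using 1; ext i; fin_cases i <;> simp [*]
    · convert hv using 1; ext i; fin_cases i <;> simp [*]
  · refine ⟨2, u 3, v 2, hα, hβ, hW.fermatLine_eq_of_le (span_pair_le ?_ ?_)⟩
    · convert hu using 1; ext i; fin_cases i <;> simp [*]
    · convert hv using 1; ext i; fin_cases i <;> simp [*]

lemma exists_eq_fermatLine_of_apply_eq_zero (hW : IsFermatLine W) {w : Fin 4 → ℂ} (hw : w ∈ W)
    (hw_ne : w ≠ 0) (hw0 : w 0 = 0) (hw1 : w 1 = 0) :
    ∃ k α β, α ^ 4 = -1 ∧ β ^ 4 = -1 ∧ fermatLine k α β = W := by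
  obtain ⟨u, hu, hu_ne, hu2⟩ := exists_ne_zero_mem_apply_eq_zero (hW.1 ▸ one_lt_two) 2
  obtain ⟨hu4, -, -, huw, hw4⟩ := hW.pencil_coeffs_eq_zero hu hw
  simp only [Fin.sum_univ_four, hw0, hw1, hu2] at hu4 huw hw4
  have hw4 : w 2 ^ 4 + w 3 ^ 4 = 0 := by linear_combination hw4
  have hw2 : w 2 ≠ 0 := fun h => hw_ne <| by
    ext i
    fin_cases i <;> simp [hw0, hw1, h, (eq_zero_iff_of_pow_four_add_pow_four_eq_zero hw4).1 h]
  have hw3 : w 3 ≠ 0 := fun h => hw2 ((eq_zero_iff_of_pow_four_add_pow_four_eq_zero hw4).2 h)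
  have hu3 : u 3 = 0 := by simpa [hw3] using huw
  have hu4 : u 0 ^ 4 + u 1 ^ 4 = 0 := by simpa [hu3] using hu4
  have hu0 : u 0 ≠ 0 := fun h => hu_ne <| by
    ext i
    fin_cases i <;> simp [h, hu2, hu3, (eq_zero_iff_of_pow_four_add_pow_four_eq_zero hu4).1 h]
  refine ⟨0, u 1 / u 0, w 3 / w 2, div_pow_four_eq_neg_one hu0 hu4,
    div_pow_four_eq_neg_one hw2 hw4, hW.fermatLine_eq_of_le (span_pair_le ?_ ?_)⟩
  · convert W.smul_mem (u 0)⁻¹ hu using 1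
    ext i; fin_cases i <;> simp [hu0, hu2, hu3, div_eq_inv_mul]
  · convert W.smul_mem (w 2)⁻¹ hw using 1
    ext i; fin_cases i <;> simp [hw0, hw1, hw2, div_eq_inv_mul]

lemma exists_eq_fermatLine (hW : IsFermatLine W) :
    ∃ k α β, α ^ 4 = -1 ∧ β ^ 4 = -1 ∧ fermatLine k α β = W := by
  by_cases h : ∀ w ∈ W, w 0 = 0 → w 1 = 0 → w = 0
  · obtain ⟨u, hu, v, hv, hu0, hu1, hv0, hv1⟩ := exists_mem_apply_eq_of_finrank_eq_two hW.1 h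
    exact hW.exists_eq_fermatLine_of_pivots hu hv hu0 hu1 hv0 hv1
  · push Not at h
    obtain ⟨w, hw, hw0, hw1, hw_ne⟩ := h
    exact hW.exists_eq_fermatLine_of_apply_eq_zero hw hw_ne hw0 hw1

end IsFermatLine

lemma ncard_setOf_pow_four_eq_neg_one : {z : ℂ | z ^ 4 = -1}.ncard = 4 := by
  have hζ := Complex.isPrimitiveRoot_exp 4 (by norm_num)
  have hroots : {z : ℂ | z ^ 4 = -1} = nthRootsFinset 4 (-1 : ℂ) := by
    ext z
    simp
  rw [hroots, Set.ncard_coe_finset, nthRootsFinset_def,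
    Multiset.toFinset_card_of_nodup (hζ.nthRoots_nodup (by norm_num)),
    hζ.card_nthRoots, if_pos (IsAlgClosed.exists_pow_nat_eq _ (by norm_num))]

lemma setOf_isFermatLine_eq_image :
    {W | IsFermatLine W} = (fun p : Fin 3 × ℂ × ℂ => fermatLine p.1 p.2.1 p.2.2) ''
      (Set.univ ×ˢ {α | α ^ 4 = -1} ×ˢ {β | β ^ 4 = -1}) := by
  ext W
  simp only [Set.mem_ofPred_eq, Set.mem_image, Set.mem_prod, Set.mem_univ, true_and, Prod.exists,
    and_assoc]
  constructor
  · exact fun hW => hW.exists_eq_fermatLine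
  · rintro ⟨k, α, β, hα, hβ, rfl⟩
    exact isFermatLine_fermatLine k hα hβ

/-- The Fermat quartic surface `{x⁴ + y⁴ + z⁴ + w⁴ = 0} ⊂ ℙ³(ℂ)` contains exactly 48
lines: there are exactly 48 two-dimensional `ℂ`-linear subspaces `W` of `ℂ⁴` on which
the polynomial `x⁴ + y⁴ + z⁴ + w⁴` vanishes identically. -/
theorem fermat_quartic_has_48_lines :
    {W : Submodule ℂ (Fin 4 → ℂ) | Module.finrank ℂ W = 2 ∧
      ∀ v ∈ W, v 0 ^ 4 + v 1 ^ 4 + v 2 ^ 4 + v 3 ^ 4 = 0}.ncard = 48 := by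
  change {W | IsFermatLine W}.ncard = 48
  have hinj : Set.InjOn (fun p : Fin 3 × ℂ × ℂ => fermatLine p.1 p.2.1 p.2.2)
      (Set.univ ×ˢ {α | α ^ 4 = -1} ×ˢ {β | β ^ 4 = -1}) := by
    rintro ⟨k, α, β⟩ - ⟨k', α', β'⟩ ⟨-, hα', -⟩ h
    obtain ⟨rfl, rfl, rfl⟩ := eq_of_fermatLine_eq (α' := α') (by rintro rfl; norm_num at hα') h
    rfl
  rw [setOf_isFermatLine_eq_image, hinj.ncard_image, Set.ncard_prod, Set.ncard_prod,
    ncard_setOf_pow_four_eq_neg_one, Set.ncard_univ, Nat.card_fin]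
end

section
/- Let Δ = 16A³ + AB² − 4A(C²+D²+E²) + 4CDE ∈ ℂ[A,B,C,D,E]. For a nonzero vector v = (A,B,C,D,E) ∈ ℂ⁵, all five partial derivatives of Δ vanish at v if and only if v is a nonzero scalar multiple of one of the ten vectors (1,0,−2,−2,2), (1,0,−2,2,−2), (1,0,2,−2,−2), (1,0,2,2,2), (0,−2,1,0,0), (0,2,1,0,0), (0,−2,0,1,0), (0,2,0,1,0), (0,−2,0,0,1), (0,2,0,0,1). In other words, the Segre cubic {Δ = 0} ⊂ ℙ⁴(ℂ) has exactly these ten singular points. -/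
/-!
At a singular point with `A ≠ 0`, `∂Δ/∂B = 2AB` forces `B = 0`, and multiplying `∂Δ/∂C`,
`∂Δ/∂D`, `∂Δ/∂E` by `C`, `D`, `E` gives `2AC² = 2AD² = 2AE² = CDE`; then `∂Δ/∂A = 0` forces
`C² = D² = E² = 4A²`, and `CD = 2AE` fixes `E`. If `A = 0`, the same three equations say that
at most one of `C, D, E` is nonzero, and `∂Δ/∂A = 0` makes `B` equal to `±2` times it.
-/

open MvPolynomial

/-- `Δ = 16A³ + AB² − 4A(C²+D²+E²) + 4CDE` as a polynomial in `ℂ[A,B,C,D,E]`,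
with `A,B,C,D,E = X 0, …, X 4`; the Segre cubic is `{Δ = 0} ⊂ ℙ⁴(ℂ)`. -/
noncomputable def segreCubic : MvPolynomial (Fin 5) ℂ :=
  C 16 * X 0 ^ 3 + X 0 * X 1 ^ 2 - C 4 * X 0 * (X 2 ^ 2 + X 3 ^ 2 + X 4 ^ 2)
    + C 4 * X 2 * X 3 * X 4

theorem eval_pderiv_segreCubic (a b c d e : ℂ) (i : Fin 5) :
    eval ![a, b, c, d, e] (pderiv i segreCubic) =
      ![48 * a ^ 2 + b ^ 2 - 4 * (c ^ 2 + d ^ 2 + e ^ 2), 2 * a * b, 4 * (d * e - 2 * a * c),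
        4 * (c * e - 2 * a * d), 4 * (c * d - 2 * a * e)] i := by
  fin_cases i <;> simp [segreCubic] <;> ring

theorem eval_pderiv_segreCubic_eq_zero_iff (a b c d e : ℂ) :
    (∀ i, eval ![a, b, c, d, e] (pderiv i segreCubic) = 0) ↔
      48 * a ^ 2 + b ^ 2 = 4 * (c ^ 2 + d ^ 2 + e ^ 2) ∧ a * b = 0 ∧ d * e = 2 * a * c ∧
        c * e = 2 * a * d ∧ c * d = 2 * a * e := by
  simp [Fin.forall_fin_succ, eval_pderiv_segreCubic, sub_eq_zero]

theorem vecCons_eq_smul_iff {M : Type*} [Mul M] (t a b c d e x₀ x₁ x₂ x₃ x₄ : M) :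
    ![a, b, c, d, e] = t • ![x₀, x₁, x₂, x₃, x₄] ↔
      a = t * x₀ ∧ b = t * x₁ ∧ c = t * x₂ ∧ d = t * x₃ ∧ e = t * x₄ := by
  simp [Matrix.smul_cons]

theorem segreCubic_critical_eq_smul_of_ne_zero {K : Type*} [Field K] {a b c d e : K}
    (h2 : (2 : K) ≠ 0) (h3 : (3 : K) ≠ 0) (ha : a ≠ 0)
    (hA : 48 * a ^ 2 + b ^ 2 = 4 * (c ^ 2 + d ^ 2 + e ^ 2)) (hB : a * b = 0)
    (hC : d * e = 2 * a * c) (hD : c * e = 2 * a * d) (hE : c * d = 2 * a * e) :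
    ![a, b, c, d, e] = a • ![1, 0, -2, -2, 2] ∨ ![a, b, c, d, e] = a • ![1, 0, -2, 2, -2] ∨
      ![a, b, c, d, e] = a • ![1, 0, 2, -2, -2] ∨ ![a, b, c, d, e] = a • ![1, 0, 2, 2, 2] := by
  have h2a : 2 * a ≠ 0 := mul_ne_zero h2 ha
  obtain rfl : b = 0 := (mul_eq_zero.mp hB).resolve_left ha
  have hcd : c ^ 2 = d ^ 2 := mul_left_cancel₀ h2a (by linear_combination d * hD - c * hC)
  have hce : c ^ 2 = e ^ 2 := mul_left_cancel₀ h2a (by linear_combination e * hE - c * hC)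
  have hc : c ^ 2 = (2 * a) ^ 2 := mul_left_cancel₀ (mul_ne_zero (mul_ne_zero h2 h2) h3)
    (by linear_combination 4 * hcd + 4 * hce - hA)
  have hd : d ^ 2 = (2 * a) ^ 2 := hcd ▸ hc
  obtain rfl : e = c * d / (2 * a) := eq_div_of_mul_eq h2a (by linear_combination -hE)
  simp only [vecCons_eq_smul_iff]
  rcases sq_eq_sq_iff_eq_or_eq_neg.mp hc with rfl | rfl <;>
    rcases sq_eq_sq_iff_eq_or_eq_neg.mp hd with rfl | rfl <;>
    field_simp <;> norm_num

theorem segreCubic_critical_eq_smul_of_eq_zero {R : Type*} [CommRing R] [NoZeroDivisors R]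
    {b c d e : R} (hA : b ^ 2 = 4 * (c ^ 2 + d ^ 2 + e ^ 2))
    (hC : d * e = 0) (hD : c * e = 0) (hE : c * d = 0) (hv : ![0, b, c, d, e] ≠ 0) :
    ∃ t : R, t ≠ 0 ∧
      (![0, b, c, d, e] = t • ![0, -2, 1, 0, 0] ∨ ![0, b, c, d, e] = t • ![0, 2, 1, 0, 0] ∨
        ![0, b, c, d, e] = t • ![0, -2, 0, 1, 0] ∨ ![0, b, c, d, e] = t • ![0, 2, 0, 1, 0] ∨
        ![0, b, c, d, e] = t • ![0, -2, 0, 0, 1] ∨ ![0, b, c, d, e] = t • ![0, 2, 0, 0, 1]) := by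
  rcases eq_or_ne c 0 with rfl | hc
  · rcases eq_or_ne d 0 with rfl | hd
    · rcases eq_or_ne e 0 with rfl | he
      · obtain rfl : b = 0 := pow_eq_zero_iff two_ne_zero |>.mp (by linear_combination hA)
        exact absurd (by simp) hv
      · refine ⟨e, he, ?_⟩
        rcases sq_eq_sq_iff_eq_or_eq_neg.mp (by linear_combination hA : b ^ 2 = (2 * e) ^ 2)
          with rfl | rfl <;> simp [mul_comm]
    · obtain rfl : e = 0 := (mul_eq_zero.mp hC).resolve_left hd
      refine ⟨d, hd, ?_⟩
      rcases sq_eq_sq_iff_eq_or_eq_neg.mp (by linear_combination hA : b ^ 2 = (2 * d) ^ 2)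
        with rfl | rfl <;> simp [mul_comm]
  · obtain rfl : d = 0 := (mul_eq_zero.mp hE).resolve_left hc
    obtain rfl : e = 0 := (mul_eq_zero.mp hD).resolve_left hc
    refine ⟨c, hc, ?_⟩
    rcases sq_eq_sq_iff_eq_or_eq_neg.mp (by linear_combination hA : b ^ 2 = (2 * c) ^ 2)
      with rfl | rfl <;> simp [mul_comm]

/-- For a nonzero `v ∈ ℂ⁵`, all five partial derivatives of `Δ` vanish at `v` iff `v` is
a nonzero scalar multiple of one of the ten listed vectors; i.e. the Segre cubic
`{Δ = 0} ⊂ ℙ⁴(ℂ)` has exactly these ten singular points. -/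
theorem segreCubic_singular_points (v : Fin 5 → ℂ) (hv : v ≠ 0) :
    (∀ i, eval v (pderiv i segreCubic) = 0) ↔
      ∃ t : ℂ, t ≠ 0 ∧
        (v = t • ![1, 0, -2, -2, 2] ∨ v = t • ![1, 0, -2, 2, -2] ∨
          v = t • ![1, 0, 2, -2, -2] ∨ v = t • ![1, 0, 2, 2, 2] ∨
          v = t • ![0, -2, 1, 0, 0] ∨ v = t • ![0, 2, 1, 0, 0] ∨
          v = t • ![0, -2, 0, 1, 0] ∨ v = t • ![0, 2, 0, 1, 0] ∨
          v = t • ![0, -2, 0, 0, 1] ∨ v = t • ![0, 2, 0, 0, 1]) := by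
  obtain ⟨a, b, c, d, e, rfl⟩ : ∃ a b c d e, v = ![a, b, c, d, e] :=
    ⟨v 0, v 1, v 2, v 3, v 4, by ext i; fin_cases i <;> rfl⟩
  rw [eval_pderiv_segreCubic_eq_zero_iff]
  constructor
  · rintro ⟨hA, hB, hC, hD, hE⟩
    rcases eq_or_ne a 0 with rfl | ha
    · obtain ⟨t, ht, h⟩ := segreCubic_critical_eq_smul_of_eq_zero (by linear_combination hA)
        (by linear_combination hC) (by linear_combination hD) (by linear_combination hE) hv
      exact ⟨t, ht, by tauto⟩
    · have h := segreCubic_critical_eq_smul_of_ne_zero two_ne_zero three_ne_zero ha hA hB hC hD hE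
      exact ⟨a, ha, by tauto⟩
  · rintro ⟨t, -, h | h | h | h | h | h | h | h | h | h⟩ <;>
      obtain ⟨rfl, rfl, rfl, rfl, rfl⟩ := (vecCons_eq_smul_iff ..).mp h <;>
      refine ⟨?_, ?_, ?_, ?_, ?_⟩ <;> ring
end

section
/- Let Ω be the subgroup of PGL₄(ℂ) × PGL₅(ℂ) generated by the five pairs (ḡᵢ, h̄ᵢ), i = 1,…,5, where: g₁ = diag(1,1,1,−1) and h₁ = diag(1,−1,1,1,1); g₂ is the permutation matrix swapping the 3rd and 4th coordinates and h₂ is the permutation matrix swapping the 4th and 5th coordinates; g₃ is the permutation matrix swapping the 2nd and 3rd coordinates and h₃ is the permutation matrix swapping the 3rd and 4th coordinates; g₄ = diag(1,1,i,i) and h₄ = diag(1,−1,1,−1,−1); g₅ is the matrix of (x,y,z,w) ↦ (x−y, x+y, z−w, z+w) and h₅ is the matrix of (A,B,C,D,E) ↦ (2A+C, 8(D−E), 12A−2C, B+2D+2E, −B+2D+2E). Then the centre of Ω is trivial; in particular Ω is not isomorphic to the direct product (ℤ/2ℤ)⁴ × S₆. -/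
/-!
A central element `(ā, b̄)` of `Ω` commutes in `PGL` with every generator. If `ā` commutes
with `ḡ` and `tr g ≠ 0`, then `A g A⁻¹ = c g` for a scalar `c`, and taking traces gives `c = 1`,
so `A` commutes with `g` on the nose; every generator except `g₄` has nonzero trace.
The sign changes `g₁`, `h₁`, `h₄` and their conjugates by the permutation generators add up
to diagonal matrices with distinct entries, so `A` and `B` are diagonal, and the nonzero
off-diagonal entries of the other generators force their diagonal entries to agree: `A` and
`B` are scalar. On the other hand `(ℤ/2)⁴ × S₆` has the nontrivial central subgroup `(ℤ/2)⁴ × 1`.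
-/

open Matrix

/-- The subgroup of nonzero scalar matrices in `GLₙ(ℂ)`. -/
noncomputable def scalarUnits (n : ℕ) : Subgroup (GL (Fin n) ℂ) :=
  (Units.map (algebraMap ℂ (Matrix (Fin n) (Fin n) ℂ)).toMonoidHom).range

instance scalarUnits_normal (n : ℕ) : (scalarUnits n).Normal := by
  constructor
  rintro s hs g
  obtain ⟨c, rfl⟩ := hs
  refine ⟨c, Units.ext ?_⟩
  simp only [Units.coe_map, Units.val_mul, MonoidHom.coe_coe, RingHom.toMonoidHom_eq_coe]
  rw [← Algebra.commutes, mul_assoc, Units.mul_inv, mul_one]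

/-- `PGLₙ(ℂ)`, the quotient of `GLₙ(ℂ)` by its subgroup of nonzero scalar matrices. -/
noncomputable def PGL (n : ℕ) : Type :=
  GL (Fin n) ℂ ⧸ scalarUnits n

noncomputable instance (n : ℕ) : Group (PGL n) :=
  inferInstanceAs (Group (GL (Fin n) ℂ ⧸ scalarUnits n))

/-- The natural projection `GLₙ(ℂ) → PGLₙ(ℂ)`. -/
noncomputable def toPGL (n : ℕ) : GL (Fin n) ℂ →* PGL n :=
  QuotientGroup.mk' (scalarUnits n)

/-- `g₁ = diag(1,1,1,−1)`. -/
noncomputable def g₁ : GL (Fin 4) ℂ :=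
  Matrix.GeneralLinearGroup.mkOfDetNeZero !![1,0,0,0; 0,1,0,0; 0,0,1,0; 0,0,0,-1]
    (by simp +decide [Matrix.det_succ_row_zero, Fin.sum_univ_succ, Fin.succAbove] <;> norm_num)

/-- `g₂`, the permutation matrix swapping the 3rd and 4th coordinates. -/
noncomputable def g₂ : GL (Fin 4) ℂ :=
  Matrix.GeneralLinearGroup.mkOfDetNeZero !![1,0,0,0; 0,1,0,0; 0,0,0,1; 0,0,1,0]
    (by simp +decide [Matrix.det_succ_row_zero, Fin.sum_univ_succ, Fin.succAbove] <;> norm_num)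

/-- `g₃`, the permutation matrix swapping the 2nd and 3rd coordinates. -/
noncomputable def g₃ : GL (Fin 4) ℂ :=
  Matrix.GeneralLinearGroup.mkOfDetNeZero !![1,0,0,0; 0,0,1,0; 0,1,0,0; 0,0,0,1]
    (by simp +decide [Matrix.det_succ_row_zero, Fin.sum_univ_succ, Fin.succAbove] <;> norm_num)

/-- `g₄ = diag(1,1,i,i)`. -/
noncomputable def g₄ : GL (Fin 4) ℂ :=
  Matrix.GeneralLinearGroup.mkOfDetNeZero
    !![1,0,0,0; 0,1,0,0; 0,0,Complex.I,0; 0,0,0,Complex.I]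
    (by simp +decide [Matrix.det_succ_row_zero, Fin.sum_univ_succ, Fin.succAbove] <;> norm_num)

/-- `g₅`, the matrix of `(x,y,z,w) ↦ (x−y, x+y, z−w, z+w)`. -/
noncomputable def g₅ : GL (Fin 4) ℂ :=
  Matrix.GeneralLinearGroup.mkOfDetNeZero !![1,-1,0,0; 1,1,0,0; 0,0,1,-1; 0,0,1,1]
    (by simp +decide [Matrix.det_succ_row_zero, Fin.sum_univ_succ, Fin.succAbove] <;> norm_num)

/-- `h₁ = diag(1,−1,1,1,1)`. -/
noncomputable def h₁ : GL (Fin 5) ℂ :=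
  Matrix.GeneralLinearGroup.mkOfDetNeZero
    !![1,0,0,0,0; 0,-1,0,0,0; 0,0,1,0,0; 0,0,0,1,0; 0,0,0,0,1]
    (by simp +decide [Matrix.det_succ_row_zero, Fin.sum_univ_succ, Fin.succAbove] <;> norm_num)

/-- `h₂`, the permutation matrix swapping the 4th and 5th coordinates. -/
noncomputable def h₂ : GL (Fin 5) ℂ :=
  Matrix.GeneralLinearGroup.mkOfDetNeZero
    !![1,0,0,0,0; 0,1,0,0,0; 0,0,1,0,0; 0,0,0,0,1; 0,0,0,1,0]
    (by simp +decide [Matrix.det_succ_row_zero, Fin.sum_univ_succ, Fin.succAbove] <;> norm_num)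

/-- `h₃`, the permutation matrix swapping the 3rd and 4th coordinates. -/
noncomputable def h₃ : GL (Fin 5) ℂ :=
  Matrix.GeneralLinearGroup.mkOfDetNeZero
    !![1,0,0,0,0; 0,1,0,0,0; 0,0,0,1,0; 0,0,1,0,0; 0,0,0,0,1]
    (by simp +decide [Matrix.det_succ_row_zero, Fin.sum_univ_succ, Fin.succAbove] <;> norm_num)

/-- `h₄ = diag(1,−1,1,−1,−1)`. -/
noncomputable def h₄ : GL (Fin 5) ℂ :=
  Matrix.GeneralLinearGroup.mkOfDetNeZero
    !![1,0,0,0,0; 0,-1,0,0,0; 0,0,1,0,0; 0,0,0,-1,0; 0,0,0,0,-1]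
    (by simp +decide [Matrix.det_succ_row_zero, Fin.sum_univ_succ, Fin.succAbove] <;> norm_num)

/-- `h₅`, the matrix of `(A,B,C,D,E) ↦ (2A+C, 8(D−E), 12A−2C, B+2D+2E, −B+2D+2E)`. -/
noncomputable def h₅ : GL (Fin 5) ℂ :=
  Matrix.GeneralLinearGroup.mkOfDetNeZero
    !![2,0,1,0,0; 0,0,0,8,-8; 12,0,-2,0,0; 0,1,0,2,2; 0,-1,0,2,2]
    (by simp +decide [Matrix.det_succ_row_zero, Fin.sum_univ_succ, Fin.succAbove] <;> norm_num)

/-- The group `Ω ≤ PGL₄(ℂ) × PGL₅(ℂ)` generated by the pairs `(ḡᵢ, h̄ᵢ)`. -/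
noncomputable def Ω : Subgroup (PGL 4 × PGL 5) :=
  Subgroup.closure {(toPGL 4 g₁, toPGL 5 h₁), (toPGL 4 g₂, toPGL 5 h₂),
    (toPGL 4 g₃, toPGL 5 h₃), (toPGL 4 g₄, toPGL 5 h₄), (toPGL 4 g₅, toPGL 5 h₅)}

namespace Matrix

theorem diagonal_mem_range_scalar {n R : Type*} [Fintype n] [DecidableEq n] [Semiring R]
    {a : n → R} (i₀ : n) (h : ∀ i, a i = a i₀) : diagonal a ∈ Set.range (scalar n) :=
  ⟨a i₀, by rw [scalar_apply]; exact congrArg diagonal (funext fun i => (h i).symm)⟩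

variable {n R : Type*} [Fintype n] [DecidableEq n] [CommRing R] [NoZeroDivisors R]

theorem apply_eq_zero_of_commute_diagonal {A : Matrix n n R} {d : n → R}
    (h : Commute A (diagonal d)) {i j : n} (hij : d i ≠ d j) : A i j = 0 := by
  have hij' := congr_fun₂ h.eq i j
  rw [mul_diagonal, diagonal_mul] at hij'
  have : A i j * (d j - d i) = 0 := by linear_combination hij'
  exact (mul_eq_zero.mp this).resolve_right (sub_ne_zero.mpr hij.symm)

theorem eq_diagonal_diag_of_commute_diagonal {A : Matrix n n R} {d : n → R}
    (h : Commute A (diagonal d)) (hd : Function.Injective d) : A = diagonal A.diag := by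
  ext i j
  rcases eq_or_ne i j with rfl | hij
  · simp
  · rw [diagonal_apply_ne _ hij, apply_eq_zero_of_commute_diagonal h (hd.ne hij)]

theorem apply_eq_apply_of_commute_diagonal {a : n → R} {M : Matrix n n R}
    (h : Commute (diagonal a) M) {i j : n} (hM : M i j ≠ 0) : a i = a j :=
  not_imp_comm.mp (apply_eq_zero_of_commute_diagonal h.symm) hM

end Matrix

theorem Subgroup.commute_of_mem_center_closure {G : Type*} [Group G] {S : Set G} {z : closure S}
    (hz : z ∈ center (closure S)) {x : G} (hx : x ∈ S) : Commute (z : G) x :=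
  (congrArg Subtype.val (mem_center_iff.mp hz ⟨x, subset_closure hx⟩)).symm

theorem Subgroup.center_eq_bot_of_mulEquiv {G H : Type*} [Group G] [Group H] (e : G ≃* H)
    (h : center G = ⊥) : center H = ⊥ := by
  refine eq_bot_iff.mpr fun z hz => ?_
  have hz' : e.symm z ∈ center G := (centerCongr e.symm ⟨z, hz⟩).2
  rw [h, mem_bot, MulEquiv.map_eq_one_iff] at hz'
  exact mem_bot.mpr hz'

theorem Subgroup.center_prod_ne_bot {G H : Type*} [CommGroup G] [Nontrivial G] [Group H] :
    center (G × H) ≠ ⊥ := by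
  rw [Subgroup.center_prod, CommGroup.center_eq_top, Ne, eq_bot_iff]
  obtain ⟨x, hx⟩ := exists_ne (1 : G)
  intro h
  have hx1 : ((x, 1) : G × H) ∈ (⊤ : Subgroup G).prod (center H) :=
    mem_prod.mpr ⟨mem_top x, one_mem _⟩
  exact hx (Prod.ext_iff.mp (mem_bot.mp (h hx1))).1

theorem scalarUnits_eq_center (n : ℕ) : scalarUnits n = Subgroup.center (GL (Fin n) ℂ) := by
  rw [GeneralLinearGroup.center_eq_range_scalar]
  rfl

theorem toPGL_eq_one_iff {n : ℕ} {A : GL (Fin n) ℂ} :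
    toPGL n A = 1 ↔ A.val ∈ Set.range (scalar (Fin n)) := by
  rw [← GeneralLinearGroup.mem_center_iff_val_mem_range_scalar, ← scalarUnits_eq_center]
  exact QuotientGroup.eq_one_iff A

theorem commute_val_of_commute_toPGL {n : ℕ} {A g : GL (Fin n) ℂ}
    (h : Commute (toPGL n A) (toPGL n g)) (hg : trace g.val ≠ 0) : Commute A.val g.val := by
  obtain ⟨z, hz, hAgz⟩ := (QuotientGroup.mk'_eq_mk' (scalarUnits n)).mp
    (show toPGL n (A * g) = toPGL n (g * A) by simpa only [map_mul] using h.eq)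
  rw [scalarUnits_eq_center, GeneralLinearGroup.mem_center_iff_val_mem_range_scalar] at hz
  obtain ⟨c, hc⟩ := hz
  have hconj : g * z = A⁻¹ * g * A := by rw [mul_assoc A⁻¹, ← hAgz]; group
  have htr := congrArg (fun x : GL (Fin n) ℂ => trace x.val) hconj
  have hc1 : c = 1 := by
    simp only [Units.val_mul, ← hc, trace_units_conj', scalar_apply, ← smul_one_eq_diagonal,
      Matrix.mul_smul, Matrix.mul_one, trace_smul, smul_eq_mul] at htr
    exact mul_left_cancel₀ hg (by linear_combination htr)
  have hz1 : z = 1 := Units.ext (by rw [← hc, hc1, map_one, Units.val_one])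
  rw [hz1, mul_one] at hAgz
  exact congrArg Units.val hAgz

-- `g₂ g₁ g₂` and `g₃ g₂ g₁ g₂ g₃` are the sign changes of the 3rd and of the 2nd coordinate;
-- with weights 1, 2, 4 the three sign changes give pairwise distinct diagonal entries.
theorem g_sign_changes_combination :
    g₁.val + 2 • (g₂.val * g₁.val * g₂.val) + 4 • (g₃.val * g₂.val * g₁.val * g₂.val * g₃.val) =
      diagonal ![7, -1, 3, 5] := by
  simp only [g₁, g₂, g₃, GeneralLinearGroup.val_mkOfDetNeZero]
  ext i j
  fin_cases i <;> fin_cases j <;> norm_num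

theorem mem_range_scalar_of_commute_g {A : Matrix (Fin 4) (Fin 4) ℂ} (hA₁ : Commute A g₁.val)
    (hA₂ : Commute A g₂.val) (hA₃ : Commute A g₃.val) (hA₅ : Commute A g₅.val) :
    A ∈ Set.range (scalar (Fin 4)) := by
  have hD : Commute A (diagonal ![7, -1, 3, 5]) := by
    rw [← g_sign_changes_combination]
    have h₂₁₂ := (hA₂.mul_right hA₁).mul_right hA₂
    have h₃₂₁₂₃ := (((hA₃.mul_right hA₂).mul_right hA₁).mul_right hA₂).mul_right hA₃
    exact (hA₁.add_right (h₂₁₂.smul_right 2)).add_right (h₃₂₁₂₃.smul_right 4)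
  obtain ⟨a, rfl⟩ : ∃ a, A = diagonal a := ⟨_, eq_diagonal_diag_of_commute_diagonal hD (by
    intro i j hij; fin_cases i <;> fin_cases j <;> first | rfl | norm_num at hij)⟩
  have h01 := apply_eq_apply_of_commute_diagonal hA₅ (i := 0) (j := 1) (by simp [g₅])
  have h12 := apply_eq_apply_of_commute_diagonal hA₃ (i := 1) (j := 2) (by simp [g₃])
  have h23 := apply_eq_apply_of_commute_diagonal hA₂ (i := 2) (j := 3) (by simp [g₂])
  exact diagonal_mem_range_scalar 0 fun i => by fin_cases i <;> simp [h01, h12, h23]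

-- `h₃ h₄ h₃ = diag(1,-1,-1,1,-1)`, and the weights 1, 2, 4 again separate all coordinates.
theorem h_sign_changes_combination :
    h₁.val + 2 • h₄.val + 4 • (h₃.val * h₄.val * h₃.val) = diagonal ![7, -7, -1, 3, -5] := by
  simp only [h₁, h₃, h₄, GeneralLinearGroup.val_mkOfDetNeZero]
  ext i j
  fin_cases i <;> fin_cases j <;> norm_num

theorem mem_range_scalar_of_commute_h {B : Matrix (Fin 5) (Fin 5) ℂ} (hB₁ : Commute B h₁.val)
    (hB₂ : Commute B h₂.val) (hB₃ : Commute B h₃.val) (hB₄ : Commute B h₄.val)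
    (hB₅ : Commute B h₅.val) : B ∈ Set.range (scalar (Fin 5)) := by
  have hD : Commute B (diagonal ![7, -7, -1, 3, -5]) := by
    rw [← h_sign_changes_combination]
    have h₃₄₃ := (hB₃.mul_right hB₄).mul_right hB₃
    exact (hB₁.add_right (hB₄.smul_right 2)).add_right (h₃₄₃.smul_right 4)
  obtain ⟨b, rfl⟩ : ∃ b, B = diagonal b := ⟨_, eq_diagonal_diag_of_commute_diagonal hD (by
    intro i j hij; fin_cases i <;> fin_cases j <;> first | rfl | norm_num at hij)⟩
  have h02 := apply_eq_apply_of_commute_diagonal hB₅ (i := 0) (j := 2) (by simp [h₅])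
  have h13 := apply_eq_apply_of_commute_diagonal hB₅ (i := 1) (j := 3) (by simp [h₅])
  have h23 := apply_eq_apply_of_commute_diagonal hB₃ (i := 2) (j := 3) (by simp [h₃])
  have h34 := apply_eq_apply_of_commute_diagonal hB₂ (i := 3) (j := 4) (by simp [h₂])
  exact diagonal_mem_range_scalar 0 fun i => by fin_cases i <;> simp [h02, h13, h23, h34]

theorem center_Ω_eq_bot : Subgroup.center Ω = ⊥ := by
  rw [eq_bot_iff]
  rintro ⟨⟨a, b⟩, _⟩ hz
  obtain ⟨A, rfl⟩ : ∃ A, toPGL 4 A = a := QuotientGroup.mk'_surjective _ a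
  obtain ⟨B, rfl⟩ : ∃ B, toPGL 5 B = b := QuotientGroup.mk'_surjective _ b
  have hgen (x) (hx) := Prod.commute_iff.mp (Subgroup.commute_of_mem_center_closure hz (x := x) hx)
  obtain ⟨hA₁, hB₁⟩ := hgen (toPGL 4 g₁, toPGL 5 h₁) (by simp)
  obtain ⟨hA₂, hB₂⟩ := hgen (toPGL 4 g₂, toPGL 5 h₂) (by simp)
  obtain ⟨hA₃, hB₃⟩ := hgen (toPGL 4 g₃, toPGL 5 h₃) (by simp)
  obtain ⟨-, hB₄⟩ := hgen (toPGL 4 g₄, toPGL 5 h₄) (by simp)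
  obtain ⟨hA₅, hB₅⟩ := hgen (toPGL 4 g₅, toPGL 5 h₅) (by simp)
  have hA : A.val ∈ Set.range (scalar (Fin 4)) := mem_range_scalar_of_commute_g
    (commute_val_of_commute_toPGL hA₁ (by norm_num [g₁, trace, Fin.sum_univ_succ]))
    (commute_val_of_commute_toPGL hA₂ (by norm_num [g₂, trace, Fin.sum_univ_succ]))
    (commute_val_of_commute_toPGL hA₃ (by norm_num [g₃, trace, Fin.sum_univ_succ]))
    (commute_val_of_commute_toPGL hA₅ (by norm_num [g₅, trace, Fin.sum_univ_succ]))
  have hB : B.val ∈ Set.range (scalar (Fin 5)) := mem_range_scalar_of_commute_h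
    (commute_val_of_commute_toPGL hB₁ (by norm_num [h₁, trace, Fin.sum_univ_succ]))
    (commute_val_of_commute_toPGL hB₂ (by norm_num [h₂, trace, Fin.sum_univ_succ]))
    (commute_val_of_commute_toPGL hB₃ (by norm_num [h₃, trace, Fin.sum_univ_succ]))
    (commute_val_of_commute_toPGL hB₄ (by norm_num [h₄, trace, Fin.sum_univ_succ]))
    (commute_val_of_commute_toPGL hB₅ (by norm_num [h₅, trace, Fin.sum_univ_succ]))
  exact Subgroup.mem_bot.mpr <| Subtype.ext <|
    Prod.ext (toPGL_eq_one_iff.mpr hA) (toPGL_eq_one_iff.mpr hB)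

/-- The centre of `Ω` is trivial; in particular `Ω` is not isomorphic to the direct
product `(ℤ/2ℤ)⁴ × S₆`. -/
theorem omega_center_trivial_and_not_product :
    Subgroup.center Ω = ⊥ ∧
      IsEmpty (Ω ≃* Multiplicative (ZMod 2 × ZMod 2 × ZMod 2 × ZMod 2) ×
        Equiv.Perm (Fin 6)) :=
  ⟨center_Ω_eq_bot, ⟨fun e =>
    Subgroup.center_prod_ne_bot (Subgroup.center_eq_bot_of_mulEquiv e center_Ω_eq_bot)⟩⟩
end
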